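/- arXiv:2507.11469 — 2 statements merged into one kernel-verified Lean document; each statement's English description precedes it below -/
import Mathlib

section
/- A kV₄-module is an indecomposable permutation module if and only if it is isomorphic to one of the five modules: the trivial module k, E_t, E_{t+1}, E_∞, and the regular module kV₄. Equivalently, these are exactly the modules k[V₄/H] for the five subgroups H of V₄, namely H = V₄, ⟨τ⟩, ⟨στ⟩, ⟨σ⟩, {1}. -/
open Multiplicative

/-! ## The Klein four-group and its group algebra -/

/-- The Klein four-group `V₄ = ⟨σ, τ⟩`. -/
abbrev V4 : Type := Multiplicative (ZMod 2) × Multiplicative (ZMod 2)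

/-- The group algebra `kV₄`. -/
abbrev kV4 (k : Type) [Field k] : Type := MonoidAlgebra k V4

/-- The generator `σ` of `V₄`. -/
def sigma4 : V4 := (ofAdd 1, 1)

/-- The generator `τ` of `V₄`. -/
def tau4 : V4 := (1, ofAdd 1)

/-- The element `a = σ + 1` of `kV₄` (in characteristic 2, `σ + 1 = σ - 1`). -/
noncomputable def aElt (k : Type) [Field k] : kV4 k := MonoidAlgebra.of k V4 sigma4 + 1

/-- The element `b = τ + 1` of `kV₄`. -/
noncomputable def bElt (k : Type) [Field k] : kV4 k := MonoidAlgebra.of k V4 tau4 + 1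

/-! ## Building representations of `V₄` -/

/-- A monoid hom out of `Multiplicative (ZMod 2)` determined by an involution. -/
noncomputable def involHom {M : Type} [Monoid M] (S : M) (hS : S * S = 1) :
    Multiplicative (ZMod 2) →* M where
  toFun g := S ^ (toAdd g).val
  map_one' := by simp
  map_mul' x y := by
    have h2 : S ^ 2 = 1 := by rwa [pow_two]
    have key : ∀ m : ℕ, S ^ (m % 2) = S ^ m := by
      intro m
      conv_rhs => rw [← Nat.div_add_mod m 2]
      rw [pow_add, pow_mul, h2, one_pow, one_mul]
    show S ^ (toAdd (x * y)).val = S ^ (toAdd x).val * S ^ (toAdd y).val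
    rw [toAdd_mul, ZMod.val_add, key, pow_add]

/-- The representation of `V₄` determined by two commuting involutions `S` (the action
of `σ`) and `T` (the action of `τ`). -/
noncomputable def kleinRep (k : Type) [Field k] {V : Type} [AddCommGroup V] [Module k V]
    (S T : Module.End k V) (hS : S * S = 1) (hT : T * T = 1) (hST : S * T = T * S) :
    Representation k V4 V :=
  MonoidHom.noncommCoprod (involHom S hS) (involHom T hT)
    (fun _ _ => Commute.pow_pow (show Commute S T from hST) _ _)

section Pair

variable (k : Type) [Field k]

/-- The endomorphism `(u, v) ↦ (0, f u)` of `(I → k) × (J → k)`. -/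
noncomputable def auxEnd {I J : Type} (f : (I → k) →ₗ[k] (J → k)) :
    Module.End k ((I → k) × (J → k)) :=
  (LinearMap.inr k (I → k) (J → k)).comp (f.comp (LinearMap.fst k (I → k) (J → k)))

lemma auxEnd_mul {I J : Type} (f g : (I → k) →ₗ[k] (J → k)) :
    auxEnd k f * auxEnd k g = 0 := by
  apply LinearMap.ext
  intro x
  simp [auxEnd, Module.End.mul_apply]

lemma end_add_self {V : Type} [AddCommGroup V] [Module k V] [CharP k 2]
    (A : Module.End k V) : A + A = 0 := by
  rw [← two_smul k A]
  have h2 : (2 : k) = 0 := by exact_mod_cast CharP.cast_eq_zero k 2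
  rw [h2, zero_smul]

lemma one_add_sq [CharP k 2] {V : Type} [AddCommGroup V] [Module k V]
    (A : Module.End k V) (hA : A * A = 0) : (1 + A) * (1 + A) = 1 := by
  have h : (1 + A) * (1 + A) = 1 + (A + A) + A * A := by noncomm_ring
  rw [h, end_add_self, hA, add_zero, add_zero]

lemma one_add_comm {V : Type} [AddCommGroup V] [Module k V]
    (A B : Module.End k V) (hAB : A * B = 0) (hBA : B * A = 0) :
    (1 + A) * (1 + B) = (1 + B) * (1 + A) := by
  have h1 : (1 + A) * (1 + B) = 1 + A + B + A * B := by noncomm_ring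
  have h2 : (1 + B) * (1 + A) = 1 + A + B + B * A := by noncomm_ring
  rw [h1, h2, hAB, hBA]

/-- The representation of `V₄` on `(I → k) × (J → k)` (`I` indexing the `u`-basis and
`J` the `v`-basis) on which `a` acts by `(u, v) ↦ (0, f u)` and `b` acts by
`(u, v) ↦ (0, g u)`; equivalently `σ = 1 + a`, `τ = 1 + b`. -/
noncomputable def pairRep [CharP k 2] (I J : Type) (f g : (I → k) →ₗ[k] (J → k)) :
    Representation k V4 ((I → k) × (J → k)) :=
  kleinRep k (1 + auxEnd k f) (1 + auxEnd k g)
    (one_add_sq k _ (auxEnd_mul k f f)) (one_add_sq k _ (auxEnd_mul k g g))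
    (one_add_comm k _ _ (auxEnd_mul k f g) (auxEnd_mul k g f))

end Pair

/-! ## The indecomposable `kV₄`-modules -/

section Modules

variable (k : Type) [Field k] [CharP k 2]

/-- `a`-action for `M_{2n+1}`: `a • u_i = v_{i-1}` for `1 ≤ i ≤ n`; here `u_{i+1}` is
indexed by `i : Fin n` and `v_j` by `j : Fin (n+1)`. -/
noncomputable def MaMap (n : ℕ) : (Fin n → k) →ₗ[k] (Fin (n + 1) → k) :=
  LinearMap.pi fun j =>
    if h : (j : ℕ) < n then LinearMap.proj (⟨(j : ℕ), h⟩ : Fin n) else 0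

/-- `b`-action for `M_{2n+1}`: `b • u_i = v_i` for `1 ≤ i ≤ n`. -/
noncomputable def MbMap (n : ℕ) : (Fin n → k) →ₗ[k] (Fin (n + 1) → k) :=
  LinearMap.pi fun j =>
    if _ : (j : ℕ) = 0 then 0
    else LinearMap.proj (⟨(j : ℕ) - 1, by have := j.isLt; omega⟩ : Fin n)

/-- The representation `M_{2n+1}`. -/
noncomputable def MRep (n : ℕ) : Representation k V4 ((Fin n → k) × (Fin (n + 1) → k)) :=
  pairRep k (Fin n) (Fin (n + 1)) (MaMap k n) (MbMap k n)

/-- The `kV₄`-module `M_{2n+1}`. -/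
@[reducible] noncomputable def Mmod (n : ℕ) := (MRep k n).asModule

/-- `a`-action for `W_{2n+1}`: `a • u_i = v_i` for `1 ≤ i ≤ n`, `a • u_0 = 0`; here `u_i`
is indexed by `i : Fin (n+1)` and `v_{j+1}` by `j : Fin n`. -/
noncomputable def WaMap (n : ℕ) : (Fin (n + 1) → k) →ₗ[k] (Fin n → k) :=
  LinearMap.pi fun j =>
    LinearMap.proj (⟨(j : ℕ) + 1, by have := j.isLt; omega⟩ : Fin (n + 1))

/-- `b`-action for `W_{2n+1}`: `b • u_i = v_{i+1}` for `0 ≤ i ≤ n-1`, `b • u_n = 0`. -/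
noncomputable def WbMap (n : ℕ) : (Fin (n + 1) → k) →ₗ[k] (Fin n → k) :=
  LinearMap.pi fun j =>
    LinearMap.proj (⟨(j : ℕ), by have := j.isLt; omega⟩ : Fin (n + 1))

/-- The representation `W_{2n+1}`. -/
noncomputable def WRep (n : ℕ) : Representation k V4 ((Fin (n + 1) → k) × (Fin n → k)) :=
  pairRep k (Fin (n + 1)) (Fin n) (WaMap k n) (WbMap k n)

/-- The `kV₄`-module `W_{2n+1}`. -/
@[reducible] noncomputable def Wmod (n : ℕ) := (WRep k n).asModule

/-- `b`-action for `E_{f,n}` with `f ≠ ∞`, where `m = n·deg f` and `α` is the list of lower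
coefficients of `f^n`: `b • u_i = v_{i+1}` for `i ≤ m-2` and `b • u_{m-1} = Σ α_i v_i`. -/
noncomputable def EbMap (m : ℕ) (α : Fin m → k) : (Fin m → k) →ₗ[k] (Fin m → k) :=
  LinearMap.pi fun j =>
    (if _ : (j : ℕ) = 0 then 0
     else LinearMap.proj (⟨(j : ℕ) - 1, by have := j.isLt; omega⟩ : Fin m))
    + α j • LinearMap.proj (⟨m - 1, by have := j.isLt; omega⟩ : Fin m)

/-- The representation `E_{f,n}` (for `f ≠ ∞`), where `a • u_i = v_i`. -/
noncomputable def ERep (m : ℕ) (α : Fin m → k) : Representation k V4 ((Fin m → k) × (Fin m → k)) :=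
  pairRep k (Fin m) (Fin m) LinearMap.id (EbMap k m α)

/-- The `kV₄`-module `E_{f,n}` (for `f ≠ ∞`), presented by the coefficient vector `α` of
`f^n` below its leading term, with `m = n·deg f`. -/
@[reducible] noncomputable def Emod (m : ℕ) (α : Fin m → k) := (ERep k m α).asModule

/-- `a`-action for `E_{∞,n}`: `a • u_i = v_{i-1}` for `1 ≤ i ≤ n-1`, `a • u_0 = 0`. -/
noncomputable def EinfaMap (n : ℕ) : (Fin n → k) →ₗ[k] (Fin n → k) :=
  LinearMap.pi fun j =>
    if h : (j : ℕ) + 1 < n then LinearMap.proj (⟨(j : ℕ) + 1, h⟩ : Fin n) else 0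

/-- The representation `E_{∞,n}`, where `b • u_i = v_i`. -/
noncomputable def EinfRep (n : ℕ) : Representation k V4 ((Fin n → k) × (Fin n → k)) :=
  pairRep k (Fin n) (Fin n) (EinfaMap k n) LinearMap.id

/-- The `kV₄`-module `E_{∞,n}`. -/
@[reducible] noncomputable def Einfmod (n : ℕ) := (EinfRep k n).asModule

/-- The trivial `kV₄`-module `k`. -/
@[reducible] noncomputable def trivMod := (Representation.trivial k (G := V4) (V := k)).asModule

/-- The `kV₄`-module `E_t = E_{t,1}`. -/
@[reducible] noncomputable def EtMod := Emod k 1 0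

/-- The `kV₄`-module `E_{t+1} = E_{t+1,1}`. -/
@[reducible] noncomputable def Et1Mod := Emod k 1 1

/-- The `kV₄`-module `E_∞ = E_{∞,1}`. -/
@[reducible] noncomputable def EinfMod := Einfmod k 1

end Modules

/-! ## Permutation modules, resolutions and the permutation dimension -/

section Perm

variable (k : Type) [Field k]

/-- A `kV₄`-module is a permutation module if it is isomorphic to `k[X]` for some finite
`V₄`-set `X` (equivalently, it admits a finite `k`-basis permuted by `V₄`). -/
def IsPermMod (M : Type) [AddCommMonoid M] [Module (kV4 k) M] : Prop :=
  ∃ (ι : Type) (_ : Fintype ι) (act : MulAction V4 ι),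
    Nonempty (M ≃ₗ[kV4 k] (@Representation.ofMulAction k _ V4 _ ι act).asModule)

/-- A permutation resolution `0 → P_n → ⋯ → P_1 → P_0 → M → 0` of length at most `n`:
an exact sequence of `kV₄`-modules in which every `P_i` is a permutation module and
`P_i = 0` for `i > n`. -/
structure PermRes (M : Type) [AddCommMonoid M] [Module (kV4 k) M] (n : ℕ) where
  P : ℕ → Type
  [acm : ∀ i, AddCommMonoid (P i)]
  [mod : ∀ i, Module (kV4 k) (P i)]
  d : ∀ i, P (i + 1) →ₗ[kV4 k] P i
  ε : P 0 →ₗ[kV4 k] M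
  perm : ∀ i, IsPermMod k (P i)
  surj : Function.Surjective ε
  exact_zero : LinearMap.ker ε = LinearMap.range (d 0)
  exact_succ : ∀ i, LinearMap.ker (d i) = LinearMap.range (d (i + 1))
  bounded : ∀ i, n < i → ∀ x : P i, x = 0

/-- The permutation dimension of a `kV₄`-module: the least length of a permutation
resolution. -/
noncomputable def ppdim (M : Type) [AddCommMonoid M] [Module (kV4 k) M] : ℕ :=
  sInf {n : ℕ | Nonempty (PermRes k M n)}

/-- `SES k A B C` asserts the existence of a short exact sequence
`0 → A → B → C → 0` of `kV₄`-modules. -/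
def SES (A B C : Type) [AddCommMonoid A] [AddCommMonoid B] [AddCommMonoid C]
    [Module (kV4 k) A] [Module (kV4 k) B] [Module (kV4 k) C] : Prop :=
  ∃ (f : A →ₗ[kV4 k] B) (g : B →ₗ[kV4 k] C),
    Function.Injective f ∧ Function.Surjective g ∧ LinearMap.range f = LinearMap.ker g

end Perm

/-- A nonzero module is indecomposable if it is not the (internal) direct sum of two
nonzero submodules. -/
def IsIndecomposable (R M : Type) [Ring R] [AddCommMonoid M] [Module R M] : Prop :=
  Nontrivial M ∧ ∀ N₁ N₂ : Submodule R M, IsCompl N₁ N₂ → N₁ = ⊥ ∨ N₂ = ⊥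

/-- A `kV₄`-module is projective-free if it has no direct summand isomorphic to the
regular module `kV₄`. -/
def IsProjFree (k : Type) [Field k] (M : Type) [AddCommMonoid M] [Module (kV4 k) M] : Prop :=
  ¬ ∃ (N N' : Submodule (kV4 k) M), IsCompl N N' ∧ Nonempty (N ≃ₗ[kV4 k] kV4 k)


/-!
An indecomposable permutation module `k[X]` comes from a transitive `V₄`-set `X`, because the
orbit decomposition of `X` splits `k[X]`; hence the indecomposable permutation modules are among
the `k[V₄/H]`. Conversely `k[V₄/H]` is indecomposable: since `a² = b² = 0`, every nonzero
submodule of a `kV₄`-module contains a nonzero `V₄`-fixed vector, whereas the fixed vectors of a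
transitive permutation module are all proportional, so two complementary nonzero submodules would
meet. Finally `k[V₄/V₄] = k`, `k[V₄/1] = kV₄`, and for `H` of index two, with `γ ∉ H`, the basis
`H, H + γH` identifies `k[V₄/H]` with `E_t`, `E_{t+1}` or `E_∞` according to which of `σ`, `τ`
lie in `H`.
-/

open MonoidAlgebra Representation

theorem IsIndecomposable.of_linearEquiv {R M N : Type} [Ring R] [AddCommMonoid M]
    [AddCommMonoid N] [Module R M] [Module R N] (e : M ≃ₗ[R] N) (h : IsIndecomposable R N) :
    IsIndecomposable R M := by
  have := h.1
  refine ⟨e.toEquiv.nontrivial, fun N₁ N₂ hN => ?_⟩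
  simpa only [map_eq_bot_iff] using h.2 _ _ ((Submodule.orderIsoMapComap e).isCompl_iff.mp hN)

theorem QuotientGroup.smul_eq_mk_mul {G : Type} [Group G] {N : Subgroup G} [N.Normal] (g : G)
    (q : G ⧸ N) : g • q = (g : G ⧸ N) * q := by
  induction q using QuotientGroup.induction_on with
  | H x => rfl

namespace MonoidAlgebra

variable {k X : Type} [CommSemiring k]

theorem exists_coeff_ne_zero {f : k[X]} (hf : f ≠ 0) : ∃ x, f.coeff x ≠ 0 := by
  by_contra! h
  exact hf (coeff_injective (Finsupp.ext h))

theorem supported_ne_bot [Nontrivial k] {S : Set X} {x : X} (hx : x ∈ S) :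
    supported k k S ≠ ⊥ := by
  intro h
  have : single x (1 : k) ∈ supported k k S := mem_supported'.mpr fun y hy => by
    simp [coeff_single, show x ≠ y by rintro rfl; exact hy hx]
  rw [h, Submodule.mem_bot, single_eq_zero] at this
  exact one_ne_zero this

theorem isCompl_supported_compl (S : Set X) :
    IsCompl (supported k k S) (supported k k Sᶜ) :=
  (Submodule.orderIsoMapComap (coeffLinearEquiv k)).symm.isCompl_iff.mp
    ⟨Finsupp.disjoint_supported_supported isCompl_compl.disjoint,
      Finsupp.codisjoint_supported_supported isCompl_compl.codisjoint⟩

end MonoidAlgebra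

namespace Representation

section Equivalences

variable {k G : Type} [CommSemiring k] [Monoid G]

noncomputable def Equiv.toAsModuleEquiv {V W : Type} [AddCommMonoid V] [Module k V]
    [AddCommMonoid W] [Module k W] {ρ : Representation k G V} {σ : Representation k G W}
    (φ : ρ.Equiv σ) : ρ.asModule ≃ₗ[k[G]] σ.asModule :=
  { IntertwiningMap.equivLinearMapAsModule ρ σ φ.toIntertwiningMap with
    invFun := φ.symm
    left_inv := φ.symm_apply_apply
    right_inv := φ.apply_symm_apply }

noncomputable def ofMulActionCongr {X Y : Type} [MulAction G X] [MulAction G Y] (e : X ≃ Y)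
    (he : ∀ (g : G) (x : X), e (g • x) = g • e x) :
    (ofMulAction k G X).Equiv (ofMulAction k G Y) :=
  .mk (mapDomainLinearEquiv k k e) fun g => by ext x; simp [he]

end Equivalences

section PermutationModules

variable {k G X : Type} [CommSemiring k] [Group G] [MulAction G X]

noncomputable def ofMulActionQuotientStabilizerEquiv [MulAction.IsPretransitive G X] (x : X) :
    (ofMulAction k G (G ⧸ MulAction.stabilizer G x)).Equiv (ofMulAction k G X) :=
  ofMulActionCongr
    (.ofBijective _ ⟨MulAction.injective_ofQuotientStabilizer G x, fun y =>
      (MulAction.exists_smul_eq G x y).imp' QuotientGroup.mk fun _ h => h⟩)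
    (MulAction.ofQuotientStabilizer_smul G x)

theorem ofMulAction_quotient_apply_of_mem {H : Subgroup G} [H.Normal] {g : G} (hg : g ∈ H)
    (f : k[G ⧸ H]) : ofMulAction k G (G ⧸ H) g f = f := by
  ext q
  rw [coeff_ofMulAction, QuotientGroup.smul_eq_mk_mul,
    (QuotientGroup.eq_one_iff _).mpr (H.inv_mem hg), one_mul]

theorem supported_mem_invtSubmodule {S : Set X} (hS : ∀ (g : G) (x : X), g • x ∈ S ↔ x ∈ S) :
    supported k k S ∈ (ofMulAction k G X).invtSubmodule := by
  refine (ofMulAction k G X).mem_invtSubmodule.mpr fun g f hf => ?_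
  rw [Submodule.mem_comap, mem_supported'] at *
  intro y hy
  rw [coeff_ofMulAction]
  exact hf _ (by rwa [← hS g, smul_inv_smul])

end PermutationModules

section CommRing

variable {k G X : Type} [CommRing k] [Group G] [MulAction G X]

theorem coeff_eq_coeff_of_mem_invariants [MulAction.IsPretransitive G X] {f : k[X]}
    (hf : f ∈ (ofMulAction k G X).invariants) (x y : X) : f.coeff x = f.coeff y := by
  obtain ⟨g, rfl⟩ := MulAction.exists_smul_eq G x y
  simpa only [coeff_ofMulAction, inv_smul_smul] using congrArg (coeff · (g • x)) (hf g)

theorem isPretransitive_of_isIndecomposable [Nontrivial k] (x₀ : X)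
    (h : IsIndecomposable k[G] (ofMulAction k G X).asModule) : MulAction.IsPretransitive G X := by
  set S := MulAction.orbit G x₀
  have hS (g : G) (x : X) : g • x ∈ S ↔ x ∈ S := by
    rw [MulAction.mem_orbit_symm, MulAction.orbit_smul, MulAction.mem_orbit_symm]
  let p : (ofMulAction k G X).invtSubmodule := ⟨_, supported_mem_invtSubmodule hS⟩
  let q : (ofMulAction k G X).invtSubmodule :=
    ⟨_, supported_mem_invtSubmodule (S := Sᶜ) fun g x => (hS g x).not⟩
  have hpq : IsCompl p q := by
    have := isCompl_supported_compl (k := k) S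
    exact ⟨disjoint_iff.mpr (Subtype.ext (disjoint_iff.mp this.1)),
      codisjoint_iff.mpr (Subtype.ext (codisjoint_iff.mp this.2))⟩
  have := h.2 _ _ ((ofMulAction k G X).mapSubmodule.isCompl_iff.mp hpq)
  simp only [map_eq_bot_iff, Subtype.ext_iff] at this
  refine (MulAction.isPretransitive_iff_base x₀).mpr fun y => by_contra fun hy => ?_
  rcases this with h0 | h0
  · exact supported_ne_bot (MulAction.mem_orbit_self x₀) h0
  · exact supported_ne_bot (S := Sᶜ) hy h0

theorem exists_equiv_quotient_of_isIndecomposable [Nontrivial k] {M : Type} [AddCommMonoid M]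
    [Module k[G] M] (e : M ≃ₗ[k[G]] (ofMulAction k G X).asModule) (h : IsIndecomposable k[G] M) :
    ∃ H : Subgroup G, Nonempty (M ≃ₗ[k[G]] (ofMulAction k G (G ⧸ H)).asModule) := by
  have hX := h.of_linearEquiv e.symm
  obtain ⟨f, hf⟩ := @exists_ne _ hX.1 0
  obtain ⟨x₀, -⟩ :=
    exists_coeff_ne_zero ((ofMulAction k G X).asModuleEquiv.map_ne_zero_iff.mpr hf)
  have := isPretransitive_of_isIndecomposable x₀ hX
  exact ⟨_, ⟨e.trans (ofMulActionQuotientStabilizerEquiv x₀).symm.toAsModuleEquiv⟩⟩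

end CommRing

theorem exists_eq_smul_of_mem_invariants {k G X : Type} [Field k] [Group G] [MulAction G X]
    [MulAction.IsPretransitive G X] {f₁ f₂ : k[X]} (h₁ : f₁ ≠ 0)
    (hf₁ : f₁ ∈ (ofMulAction k G X).invariants) (hf₂ : f₂ ∈ (ofMulAction k G X).invariants) :
    ∃ c : k, f₂ = c • f₁ := by
  obtain ⟨x, hx⟩ := exists_coeff_ne_zero h₁
  refine ⟨f₂.coeff x / f₁.coeff x, coeff_injective (Finsupp.ext fun y => ?_)⟩
  rw [coeff_smul, Finsupp.smul_apply, smul_eq_mul, coeff_eq_coeff_of_mem_invariants hf₁ y x,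
    coeff_eq_coeff_of_mem_invariants hf₂ y x, div_mul_cancel₀ _ hx]

end Representation

theorem exists_smul_ne_zero_and_smul_eq_zero {R M : Type} [Semiring R] [AddCommMonoid M]
    [Module R M] {r : R} (hr : r * r = 0) {m : M} (hm : m ≠ 0) :
    ∃ s : R, s • m ≠ 0 ∧ r • s • m = 0 := by
  by_cases h : r • m = 0
  · exact ⟨1, by rwa [one_smul], by rwa [one_smul]⟩
  · exact ⟨r, h, by rw [smul_smul, hr, zero_smul]⟩

theorem smul_eq_self_of_add_one_smul_eq_zero {R M : Type} [Ring R] [CharP R 2] [AddCommMonoid M]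
    [Module R M] {r : R} {m : M} (h : (r + 1) • m = 0) : r • m = m := by
  have h2 : m + m = 0 := by rw [← two_smul R, CharTwo.two_eq_zero, zero_smul]
  rw [add_smul, one_smul] at h
  rw [← add_zero (r • m), ← h2, ← add_assoc, h, zero_add]

theorem V4.eq_cases (g : V4) : g = 1 ∨ g = sigma4 ∨ g = tau4 ∨ g = sigma4 * tau4 := by
  revert g; decide

theorem V4.mul_self (g : V4) : g * g = 1 := by
  revert g; decide

theorem V4.intertwines_of_sigma4_tau4 {k V W : Type} [CommSemiring k] [AddCommMonoid V]
    [Module k V] [AddCommMonoid W] [Module k W] {ρ : Representation k V4 V}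
    {π : Representation k V4 W} (f : V →ₗ[k] W) (hσ : ∀ v, f (ρ sigma4 v) = π sigma4 (f v))
    (hτ : ∀ v, f (ρ tau4 v) = π tau4 (f v)) (g : V4) (v : V) : f (ρ g v) = π g (f v) := by
  rcases V4.eq_cases g with rfl | rfl | rfl | rfl
  · simp
  · exact hσ v
  · exact hτ v
  · simp only [map_mul, Module.End.mul_apply, hσ, hτ]

section KleinFour

variable {k : Type} [Field k] [CharP k 2]

instance kV4.charP_two : CharP (kV4 k) 2 := charP_of_injective_algebraMap' k 2

theorem aElt_mul_self : aElt k * aElt k = 0 := by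
  rw [aElt, CharTwo.add_mul_self, ← map_mul, V4.mul_self, map_one, one_mul,
    CharTwo.add_self_eq_zero]

theorem bElt_mul_self : bElt k * bElt k = 0 := by
  rw [bElt, CharTwo.add_mul_self, ← map_mul, V4.mul_self, map_one, one_mul,
    CharTwo.add_self_eq_zero]

theorem exists_ne_zero_fixed_mem {M : Type} [AddCommMonoid M] [Module (kV4 k) M]
    {N : Submodule (kV4 k) M} (hN : N ≠ ⊥) :
    ∃ m ∈ N, m ≠ 0 ∧ ∀ g : V4, MonoidAlgebra.of k V4 g • m = m := by
  obtain ⟨m, hmN, hm⟩ := Submodule.exists_mem_ne_zero_of_ne_bot hN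
  obtain ⟨s, hs, has⟩ := exists_smul_ne_zero_and_smul_eq_zero (aElt_mul_self (k := k)) hm
  obtain ⟨t, ht, hbt⟩ := exists_smul_ne_zero_and_smul_eq_zero (bElt_mul_self (k := k)) hs
  have hσ : MonoidAlgebra.of k V4 sigma4 • t • s • m = t • s • m :=
    smul_eq_self_of_add_one_smul_eq_zero (by rw [← aElt, smul_comm, has, smul_zero])
  have hτ : MonoidAlgebra.of k V4 tau4 • t • s • m = t • s • m :=
    smul_eq_self_of_add_one_smul_eq_zero (by rw [← bElt, hbt])
  refine ⟨t • s • m, N.smul_mem _ (N.smul_mem _ hmN), ht, fun g => ?_⟩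
  rcases V4.eq_cases g with rfl | rfl | rfl | rfl
  · rw [map_one, one_smul]
  · exact hσ
  · exact hτ
  · rw [map_mul, mul_smul, hτ, hσ]

theorem isIndecomposable_ofMulAction {X : Type} [MulAction V4 X] [MulAction.IsPretransitive V4 X]
    [Nonempty X] : IsIndecomposable (kV4 k) (ofMulAction k V4 X).asModule := by
  set ρ := ofMulAction k V4 X
  have mem_invariants {m : ρ.asModule} (hm : ∀ g : V4, MonoidAlgebra.of k V4 g • m = m) :
      ρ.asModuleEquiv m ∈ ρ.invariants := fun g => by
    rw [← asAlgebraHom_of, ← asModuleEquiv_map_smul, hm]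
  refine ⟨ρ.asModuleEquiv.toEquiv.nontrivial, fun N₁ N₂ hN => by_contra fun hne => ?_⟩
  rw [not_or] at hne
  obtain ⟨m₁, h₁, h₁0, hf₁⟩ := exists_ne_zero_fixed_mem hne.1
  obtain ⟨m₂, h₂, h₂0, hf₂⟩ := exists_ne_zero_fixed_mem hne.2
  obtain ⟨c, hc⟩ := exists_eq_smul_of_mem_invariants
    (ρ.asModuleEquiv.map_ne_zero_iff.mpr h₁0) (mem_invariants hf₁) (mem_invariants hf₂)
  have hm₂ : m₂ = algebraMap k (kV4 k) c • m₁ := by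
    rw [← ρ.asModuleEquiv.symm_apply_apply m₂, hc, asModuleEquiv_symm_map_smul,
      LinearEquiv.symm_apply_apply]
  exact h₂0 (Submodule.disjoint_def.mp hN.1 m₂ (hm₂ ▸ N₁.smul_mem _ h₁) h₂)

end KleinFour

section CosetModules

variable {k : Type} [Field k]

theorem EbMap_one_zero : EbMap k 1 0 = 0 :=
  LinearMap.ext fun _ => funext fun j => by fin_cases j; simp [EbMap]

theorem EbMap_one_one : EbMap k 1 1 = LinearMap.id :=
  LinearMap.ext fun _ => funext fun j => by fin_cases j; simp [EbMap]

theorem EinfaMap_one : EinfaMap k 1 = 0 :=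
  LinearMap.ext fun _ => funext fun j => by fin_cases j; simp [EinfaMap]

noncomputable def trivModEquivQuotientTop :
    trivMod k ≃ₗ[kV4 k] (ofMulAction k V4 (V4 ⧸ (⊤ : Subgroup V4))).asModule :=
  have := QuotientGroup.subsingleton_quotient_top (G := V4)
  (ofMulActionSubsingletonEquivTrivial k V4 (V4 ⧸ (⊤ : Subgroup V4))).symm.toAsModuleEquiv

noncomputable def kV4EquivQuotientBot :
    kV4 k ≃ₗ[kV4 k] (ofMulAction k V4 (V4 ⧸ (⊥ : Subgroup V4))).asModule :=
  ofMulActionSelfAsModuleEquiv.symm.trans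
    (ofMulActionCongr QuotientGroup.quotientBot.symm.toEquiv fun _ _ => rfl).toAsModuleEquiv

variable [CharP k 2]

theorem pairRep_sigma4_apply {I J : Type} (f g : (I → k) →ₗ[k] (J → k))
    (p : (I → k) × (J → k)) : pairRep k I J f g sigma4 p = (p.1, p.2 + f p.1) := by
  simp [pairRep, kleinRep, involHom, sigma4, auxEnd, ZMod.val_one, Prod.ext_iff, add_comm]

theorem pairRep_tau4_apply {I J : Type} (f g : (I → k) →ₗ[k] (J → k))
    (p : (I → k) × (J → k)) : pairRep k I J f g tau4 p = (p.1, p.2 + g p.1) := by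
  simp [pairRep, kleinRep, involHom, tau4, auxEnd, ZMod.val_one, Prod.ext_iff, add_comm]

end CosetModules

section IndexTwo

variable {k : Type} [Field k] {H : Subgroup V4} {γ : V4}

theorem V4.mk_eq_of_not_mem (hH : ∀ x, x ∈ H ∨ γ * x ∈ H) {δ : V4} (hδ : δ ∉ H) :
    (δ : V4 ⧸ H) = γ := by
  refine QuotientGroup.eq.mpr ?_
  rw [inv_eq_of_mul_eq_one_right (V4.mul_self δ), mul_comm]
  exact (hH δ).resolve_left hδ

theorem V4.mk_eq_one_or_mk_eq (hH : ∀ x, x ∈ H ∨ γ * x ∈ H) (q : V4 ⧸ H) : q = 1 ∨ q = γ := by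
  induction q using QuotientGroup.induction_on with
  | H x => exact (em (x ∈ H)).imp (QuotientGroup.eq_one_iff x).mpr (V4.mk_eq_of_not_mem hH)

theorem ofMulAction_quotient_single_of_not_mem (hH : ∀ x, x ∈ H ∨ γ * x ∈ H) {δ : V4}
    (hδ : δ ∉ H) (q : V4 ⧸ H) (c : k) :
    ofMulAction k V4 (V4 ⧸ H) δ (single q c) = single (γ * q) c := by
  rw [ofMulAction_single, QuotientGroup.smul_eq_mk_mul, V4.mk_eq_of_not_mem hH hδ]

/-- `(u, v) ↦ u • H + v • (H + γH)`: the fixed line `k • (H + γH)` matches the `v`-coordinates,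
on which `V₄` acts trivially in `pairRep`. -/
noncomputable def indexTwoMap (H : Subgroup V4) (γ : V4) :
    ((Fin 1 → k) × (Fin 1 → k)) →ₗ[k] k[V4 ⧸ H] :=
  (LinearMap.proj 0 ∘ₗ LinearMap.fst k _ _).smulRight (single 1 1) +
    (LinearMap.proj 0 ∘ₗ LinearMap.snd k _ _).smulRight (single 1 1 + single (γ : V4 ⧸ H) 1)

theorem indexTwoMap_apply (p : (Fin 1 → k) × (Fin 1 → k)) :
    indexTwoMap H γ p = p.1 0 • single 1 1 + p.2 0 • (single 1 1 + single (γ : V4 ⧸ H) 1) :=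
  rfl

theorem indexTwoMap_bijective (hγ : γ ∉ H) (hH : ∀ x, x ∈ H ∨ γ * x ∈ H) :
    Function.Bijective (indexTwoMap (k := k) H γ) := by
  have hne : (γ : V4 ⧸ H) ≠ 1 := fun h => hγ ((QuotientGroup.eq_one_iff γ).mp h)
  have coeff_one (p) : (indexTwoMap (k := k) H γ p).coeff 1 = p.1 0 + p.2 0 := by
    simp [indexTwoMap_apply, coeff_single, hne.symm]
  have coeff_γ (p) : (indexTwoMap (k := k) H γ p).coeff γ = p.2 0 := by
    simp [indexTwoMap_apply, coeff_single, hne]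
  refine ⟨(injective_iff_map_eq_zero _).mpr fun p hp => ?_, fun f => ?_⟩
  · have h2 : p.2 0 = 0 := by simpa [hp] using (coeff_γ p).symm
    have h1 : p.1 0 = 0 := by simpa [hp, h2] using (coeff_one p).symm
    exact Prod.ext (funext fun i => by rwa [Subsingleton.elim i 0])
      (funext fun i => by rwa [Subsingleton.elim i 0])
  · refine ⟨(fun _ => f.coeff 1 - f.coeff γ, fun _ => f.coeff γ), coeff_injective ?_⟩
    ext q
    rcases V4.mk_eq_one_or_mk_eq hH q with rfl | rfl
    · simp [coeff_one]
    · simp [coeff_γ]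

variable [CharP k 2]

theorem indexTwoMap_intertwines (hH : ∀ x, x ∈ H ∨ γ * x ∈ H) {δ : V4}
    {φ : (Fin 1 → k) →ₗ[k] (Fin 1 → k)} (hφ : δ ∈ H ∧ φ = 0 ∨ δ ∉ H ∧ φ = LinearMap.id)
    (p : (Fin 1 → k) × (Fin 1 → k)) :
    indexTwoMap H γ (p.1, p.2 + φ p.1) = ofMulAction k V4 (V4 ⧸ H) δ (indexTwoMap H γ p) := by
  rcases hφ with ⟨hδ, rfl⟩ | ⟨hδ, rfl⟩
  · simp [ofMulAction_quotient_apply_of_mem hδ]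
  · simp only [indexTwoMap_apply, map_add, map_smul, ofMulAction_quotient_single_of_not_mem hH hδ,
      mul_one, ← QuotientGroup.mk_mul, V4.mul_self, QuotientGroup.mk_one, Pi.add_apply,
      LinearMap.id_apply]
    match_scalars
    · linear_combination CharTwo.add_self_eq_zero (p.1 0)
    · ring

noncomputable def pairRepEquivQuotient (hγ : γ ∉ H) (hH : ∀ x, x ∈ H ∨ γ * x ∈ H)
    {f g : (Fin 1 → k) →ₗ[k] (Fin 1 → k)}
    (hf : sigma4 ∈ H ∧ f = 0 ∨ sigma4 ∉ H ∧ f = LinearMap.id)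
    (hg : tau4 ∈ H ∧ g = 0 ∨ tau4 ∉ H ∧ g = LinearMap.id) :
    (pairRep k (Fin 1) (Fin 1) f g).Equiv (ofMulAction k V4 (V4 ⧸ H)) :=
  IntertwiningMap.ofBijective
    ⟨indexTwoMap H γ, fun δ => LinearMap.ext <|
      V4.intertwines_of_sigma4_tau4 (ρ := pairRep k (Fin 1) (Fin 1) f g) (indexTwoMap H γ)
        (fun p => by rw [pairRep_sigma4_apply, indexTwoMap_intertwines hH hf])
        (fun p => by rw [pairRep_tau4_apply, indexTwoMap_intertwines hH hg]) δ⟩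
    (indexTwoMap_bijective hγ hH)

end IndexTwo

section Classification

theorem V4.mem_or_mul_mem {H : Subgroup V4} {h γ : V4} (hh : h ∈ H)
    (hcover : ∀ x : V4, x = 1 ∨ x = h ∨ x = γ ∨ x = γ * h) (x : V4) : x ∈ H ∨ γ * x ∈ H := by
  rcases hcover x with rfl | rfl | rfl | rfl
  · exact .inl H.one_mem
  · exact .inl hh
  · exact .inr (by rw [V4.mul_self]; exact H.one_mem)
  · exact .inr (by rwa [← mul_assoc, V4.mul_self, one_mul])

variable {k : Type} [Field k] [CharP k 2] {M : Type} [AddCommMonoid M] [Module (kV4 k) M]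

theorem equiv_five_of_equiv_quotient {H : Subgroup V4}
    (e : M ≃ₗ[kV4 k] (ofMulAction k V4 (V4 ⧸ H)).asModule) :
    Nonempty (M ≃ₗ[kV4 k] trivMod k) ∨ Nonempty (M ≃ₗ[kV4 k] EtMod k) ∨
      Nonempty (M ≃ₗ[kV4 k] Et1Mod k) ∨ Nonempty (M ≃ₗ[kV4 k] EinfMod k) ∨
      Nonempty (M ≃ₗ[kV4 k] kV4 k) := by
  by_cases hσ : sigma4 ∈ H <;> by_cases hτ : tau4 ∈ H
  · obtain rfl : H = ⊤ := (Subgroup.eq_top_iff' H).mpr fun x => by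
      rcases V4.eq_cases x with rfl | rfl | rfl | rfl
      exacts [H.one_mem, hσ, hτ, H.mul_mem hσ hτ]
    exact .inl ⟨e.trans trivModEquivQuotientTop.symm⟩
  · have hH := V4.mem_or_mul_mem (γ := tau4) hσ (by decide)
    exact .inr <| .inr <| .inr <| .inl ⟨e.trans (pairRepEquivQuotient hτ hH
      (.inl ⟨hσ, EinfaMap_one⟩) (.inr ⟨hτ, rfl⟩)).toAsModuleEquiv.symm⟩
  · have hH := V4.mem_or_mul_mem (γ := sigma4) hτ (by decide)
    exact .inr <| .inl ⟨e.trans (pairRepEquivQuotient hσ hH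
      (.inr ⟨hσ, rfl⟩) (.inl ⟨hτ, EbMap_one_zero⟩)).toAsModuleEquiv.symm⟩
  · by_cases hστ : sigma4 * tau4 ∈ H
    · have hH := V4.mem_or_mul_mem (γ := sigma4) hστ (by decide)
      exact .inr <| .inr <| .inl ⟨e.trans (pairRepEquivQuotient hσ hH
        (.inr ⟨hσ, rfl⟩) (.inr ⟨hτ, EbMap_one_one⟩)).toAsModuleEquiv.symm⟩
    · obtain rfl : H = ⊥ := (Subgroup.eq_bot_iff_forall H).mpr fun x hx => by
        rcases V4.eq_cases x with rfl | rfl | rfl | rfl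
        exacts [rfl, absurd hx hσ, absurd hx hτ, absurd hx hστ]
      exact .inr <| .inr <| .inr <| .inr ⟨e.trans kV4EquivQuotientBot.symm⟩

theorem exists_equiv_quotient_of_equiv_five
    (h : Nonempty (M ≃ₗ[kV4 k] trivMod k) ∨ Nonempty (M ≃ₗ[kV4 k] EtMod k) ∨
      Nonempty (M ≃ₗ[kV4 k] Et1Mod k) ∨ Nonempty (M ≃ₗ[kV4 k] EinfMod k) ∨
      Nonempty (M ≃ₗ[kV4 k] kV4 k)) :
    ∃ H : Subgroup V4, Nonempty (M ≃ₗ[kV4 k] (ofMulAction k V4 (V4 ⧸ H)).asModule) := by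
  -- `χσ.ker = ⟨τ⟩`, `(χσ * χτ).ker = ⟨στ⟩`, `χτ.ker = ⟨σ⟩`, with decidable membership
  let χσ := MonoidHom.fst (Multiplicative (ZMod 2)) (Multiplicative (ZMod 2))
  let χτ := MonoidHom.snd (Multiplicative (ZMod 2)) (Multiplicative (ZMod 2))
  rcases h with ⟨⟨e⟩⟩ | ⟨⟨e⟩⟩ | ⟨⟨e⟩⟩ | ⟨⟨e⟩⟩ | ⟨⟨e⟩⟩
  · exact ⟨⊤, ⟨e.trans trivModEquivQuotientTop⟩⟩
  · exact ⟨χσ.ker, ⟨e.trans (pairRepEquivQuotient (γ := sigma4) (by decide) (by decide)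
      (.inr ⟨by decide, rfl⟩) (.inl ⟨by decide, EbMap_one_zero⟩)).toAsModuleEquiv⟩⟩
  · exact ⟨(χσ * χτ).ker, ⟨e.trans (pairRepEquivQuotient (γ := sigma4) (by decide) (by decide)
      (.inr ⟨by decide, rfl⟩) (.inr ⟨by decide, EbMap_one_one⟩)).toAsModuleEquiv⟩⟩
  · exact ⟨χτ.ker, ⟨e.trans (pairRepEquivQuotient (γ := tau4) (by decide) (by decide)
      (.inl ⟨by decide, EinfaMap_one⟩) (.inr ⟨by decide, rfl⟩)).toAsModuleEquiv⟩⟩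
  · exact ⟨⊥, ⟨e.trans kV4EquivQuotientBot⟩⟩

end Classification

theorem stmt2 (k : Type) [Field k] [CharP k 2]
    (M : Type) [AddCommMonoid M] [Module (kV4 k) M] :
    ((IsPermMod k M ∧ IsIndecomposable (kV4 k) M) ↔
      (Nonempty (M ≃ₗ[kV4 k] trivMod k) ∨ Nonempty (M ≃ₗ[kV4 k] EtMod k) ∨
       Nonempty (M ≃ₗ[kV4 k] Et1Mod k) ∨ Nonempty (M ≃ₗ[kV4 k] EinfMod k) ∨
       Nonempty (M ≃ₗ[kV4 k] kV4 k))) ∧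
    ((IsPermMod k M ∧ IsIndecomposable (kV4 k) M) ↔
      ∃ H : Subgroup V4,
        Nonempty (M ≃ₗ[kV4 k] (Representation.ofMulAction k V4 (V4 ⧸ H)).asModule)) := by
  have perm_indec_iff : (IsPermMod k M ∧ IsIndecomposable (kV4 k) M) ↔ ∃ H : Subgroup V4,
      Nonempty (M ≃ₗ[kV4 k] (ofMulAction k V4 (V4 ⧸ H)).asModule) := by
    constructor
    · rintro ⟨⟨X, _, _, ⟨e⟩⟩, h⟩
      exact exists_equiv_quotient_of_isIndecomposable e h
    · rintro ⟨H, ⟨e⟩⟩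
      exact ⟨⟨V4 ⧸ H, Fintype.ofFinite _, inferInstance, ⟨e⟩⟩,
        isIndecomposable_ofMulAction.of_linearEquiv e⟩
  refine ⟨perm_indec_iff.trans ⟨?_, exists_equiv_quotient_of_equiv_five⟩, perm_indec_iff⟩
  rintro ⟨H, ⟨e⟩⟩
  exact equiv_five_of_equiv_quotient e
end

section
/- Let n ≥ 1 and write (t+1)^n = t^n + Σ_{i=0}^{n−1} α_i t^i in k[t], and set γ_i = Σ_{j=0}^{i} α_j for 0 ≤ i ≤ n−1 (so γ₀ = α₀ = 1). In the kV₄-module E_{t+1,n}, the submodule ker(a) + ker(a+b) + ker(b) equals the k-span of {v₀, …, v_{n−1}} ∪ {Σ_{i=0}^{n−1} γ_i u_i}; in fact ker(a) = ker(b) = span_k{v₀,…,v_{n−1}} and ker(a+b) = span_k({v₀,…,v_{n−1}} ∪ {Σ_{i=0}^{n−1} γ_i u_i}). Here ker(c) denotes the kernel of the k-linear endomorphism given by the action of c ∈ kV₄. -/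
open Multiplicative

/-! ## Statement -/

-- Basis vectors for the kernel statements
section KerVecs

variable (k : Type) [Field k]

/-- The basis vector `u_i` of a pair module. -/
noncomputable def uVec {I J : Type} [DecidableEq I] (i : I) : (I → k) × (J → k) :=
  (Pi.single i 1, 0)

/-- The basis vector `v_j` of a pair module. -/
noncomputable def vVec {I J : Type} [DecidableEq J] (j : J) : (I → k) × (J → k) :=
  (0, Pi.single j 1)

end KerVecs

/-!
Each of `a`, `b`, `a + b` acts on `E_{t+1,n} = U ⊕ V` by `(u, v) ↦ (0, F u)` with `F = 1`, `B`,
`1 + B` respectively, where `B` is the companion matrix of `(t+1)^n`; so its kernel is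
`ker F ⊕ V`. As `α₀ = 1`, `B` is invertible. In characteristic 2, `ker (1 + B)` is the fixed
space of `B`, and `B u = u` reads `u_j = u_{j-1} + α_j u_{n-1}`, whose solutions are the
multiples of the vector of partial sums `γ`. Conversely `γ` is fixed because
`γ_{n-1} = ∑_{j<n} α_j = (1 + 1)^n - 1 = 1`.
-/

open Polynomial

section PairModule

variable (k : Type) [Field k] {I J : Type}

lemma auxEnd_add (f g : (I → k) →ₗ[k] (J → k)) :
    auxEnd k (f + g) = auxEnd k f + auxEnd k g := by
  simp only [auxEnd, LinearMap.add_comp, LinearMap.comp_add]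

lemma ker_auxEnd (f : (I → k) →ₗ[k] (J → k)) :
    LinearMap.ker (auxEnd k f) = (LinearMap.ker f).prod ⊤ := by
  rw [auxEnd, LinearMap.ker_comp_of_ker_eq_bot _ Submodule.ker_inr, LinearMap.ker_comp,
    Submodule.comap_fst]

variable [CharP k 2]

lemma pairRep_sigma4 (f g : (I → k) →ₗ[k] (J → k)) :
    pairRep k I J f g sigma4 = 1 + auxEnd k f := by
  simp [pairRep, kleinRep, sigma4, MonoidHom.noncommCoprod_apply, involHom, ZMod.val_one]

lemma pairRep_tau4 (f g : (I → k) →ₗ[k] (J → k)) :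
    pairRep k I J f g tau4 = 1 + auxEnd k g := by
  simp [pairRep, kleinRep, tau4, MonoidHom.noncommCoprod_apply, involHom, ZMod.val_one]

lemma asAlgebraHom_of_add_one {G V : Type} [Monoid G] [AddCommGroup V] [Module k V]
    (ρ : Representation k G V) (g : G) (A : Module.End k V) (hg : ρ g = 1 + A) :
    ρ.asAlgebraHom (MonoidAlgebra.of k G g + 1) = A := by
  rw [map_add, map_one, MonoidAlgebra.of_apply, Representation.asAlgebraHom_single, one_smul, hg,
    add_right_comm, end_add_self, zero_add]

lemma pairRep_asAlgebraHom_aElt (f g : (I → k) →ₗ[k] (J → k)) :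
    (pairRep k I J f g).asAlgebraHom (aElt k) = auxEnd k f :=
  asAlgebraHom_of_add_one k _ _ _ (pairRep_sigma4 k f g)

lemma pairRep_asAlgebraHom_bElt (f g : (I → k) →ₗ[k] (J → k)) :
    (pairRep k I J f g).asAlgebraHom (bElt k) = auxEnd k g :=
  asAlgebraHom_of_add_one k _ _ _ (pairRep_tau4 k f g)

lemma ERep_asAlgebraHom_aElt (m : ℕ) (α : Fin m → k) :
    (ERep k m α).asAlgebraHom (aElt k) = auxEnd k LinearMap.id :=
  pairRep_asAlgebraHom_aElt k _ _

lemma ERep_asAlgebraHom_bElt (m : ℕ) (α : Fin m → k) :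
    (ERep k m α).asAlgebraHom (bElt k) = auxEnd k (EbMap k m α) :=
  pairRep_asAlgebraHom_bElt k _ _

end PairModule

section BasisVectors

variable (k : Type) [Field k] {I J : Type}

lemma span_range_vVec [Fintype J] [DecidableEq J] :
    Submodule.span k (Set.range (vVec k (I := I) (J := J))) =
      (⊥ : Submodule k (I → k)).prod ⊤ := by
  have : vVec k (I := I) (J := J) = LinearMap.inr k (I → k) (J → k) ∘ Pi.basisFun k J := by
    ext j <;> simp [vVec]
  rw [this, Set.range_comp, ← Submodule.map_span, (Pi.basisFun k J).span_eq, Submodule.map_top,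
    LinearMap.range_inr]
  ext
  simp

lemma sum_smul_uVec [Fintype I] [DecidableEq I] (x : I → k) :
    ∑ i, x i • uVec k (J := J) i = (x, 0) := by
  ext i <;> simp [uVec, Prod.fst_sum, Prod.snd_sum, Pi.single_apply]

lemma span_range_vVec_union_singleton [Fintype J] [DecidableEq J] (x : I → k) :
    Submodule.span k (Set.range (vVec k (I := I) (J := J)) ∪ {(x, 0)}) =
      (k ∙ x).prod ⊤ := by
  have : ({(x, 0)} : Set ((I → k) × (J → k))) = LinearMap.inl k (I → k) (J → k) '' {x} :=
    (Set.image_singleton (f := LinearMap.inl k (I → k) (J → k)) (a := x)).symm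
  rw [Submodule.span_union, span_range_vVec, this, ← Submodule.map_span, Submodule.map_inl,
    Submodule.prod_sup_prod, bot_sup_eq, sup_bot_eq]

end BasisVectors

section PartialSum

variable {M : Type*} [AddCommMonoid M]

def partialSum (α : ℕ → M) (i : ℕ) : M := ∑ j ∈ Finset.range (i + 1), α j

lemma partialSum_zero (α : ℕ → M) : partialSum α 0 = α 0 := Finset.sum_range_one α

lemma partialSum_succ (α : ℕ → M) (i : ℕ) :
    partialSum α (i + 1) = partialSum α i + α (i + 1) :=
  Finset.sum_range_succ α (i + 1)

end PartialSum

section Companion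

variable {k : Type} [Field k] {m : ℕ}

lemma EbMap_apply_zero (α : Fin (m + 1) → k) (u : Fin (m + 1) → k) :
    EbMap k (m + 1) α u 0 = α 0 * u (Fin.last m) := by
  simp [EbMap, Fin.last]

lemma EbMap_apply_succ (α : Fin (m + 1) → k) (u : Fin (m + 1) → k) (j : Fin m) :
    EbMap k (m + 1) α u j.succ = u j.castSucc + α j.succ * u (Fin.last m) := by
  simp [EbMap, Fin.last, Fin.castSucc, Fin.castAdd, Fin.castLE]

lemma ker_EbMap {α : Fin (m + 1) → k} (hα : α 0 ≠ 0) :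
    LinearMap.ker (EbMap k (m + 1) α) = ⊥ := by
  refine LinearMap.ker_eq_bot'.2 fun u hu => ?_
  have hlast : u (Fin.last m) = 0 := by
    have h0 := congrFun hu 0
    rw [EbMap_apply_zero, Pi.zero_apply] at h0
    exact (mul_eq_zero.1 h0).resolve_left hα
  funext i
  induction i using Fin.lastCases with
  | last => exact hlast
  | cast j =>
    have hj := congrFun hu j.succ
    rwa [EbMap_apply_succ, hlast, mul_zero, add_zero] at hj

lemma EbMap_eq_self_iff (α : ℕ → k) (u : Fin (m + 1) → k) :
    EbMap k (m + 1) (fun i => α i) u = u ↔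
      u = u (Fin.last m) • fun i : Fin (m + 1) => partialSum α i := by
  set c := u (Fin.last m)
  constructor
  · intro h
    funext i
    induction i using Fin.induction with
    | zero =>
      have h0 := congrFun h 0
      rw [EbMap_apply_zero] at h0
      rw [Pi.smul_apply, smul_eq_mul, ← h0, Fin.val_zero, partialSum_zero, mul_comm]
    | succ j ih =>
      have hj := congrFun h j.succ
      rw [EbMap_apply_succ] at hj
      simp only [Pi.smul_apply, smul_eq_mul] at ih ⊢
      rw [← hj, ih, Fin.val_succ, partialSum_succ, Fin.val_castSucc]
      ring
  · intro h
    have hu : ∀ i, u i = c * partialSum α i := fun i => congrFun h i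
    funext i
    cases i using Fin.cases with
    | zero => rw [EbMap_apply_zero, hu 0, Fin.val_zero, partialSum_zero, mul_comm]
    | succ j =>
      rw [EbMap_apply_succ, hu j.succ, hu j.castSucc, Fin.val_succ, partialSum_succ,
        Fin.val_castSucc]
      ring

lemma ker_id_add_EbMap [CharP k 2] {α : ℕ → k} (hα : partialSum α m = 1) :
    LinearMap.ker (LinearMap.id + EbMap k (m + 1) (fun i => α i)) =
      k ∙ fun i : Fin (m + 1) => partialSum α i := by
  set γ : Fin (m + 1) → k := fun i => partialSum α i
  have hfix : EbMap k (m + 1) (fun i => α i) γ = γ := by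
    rw [EbMap_eq_self_iff]
    show γ = partialSum α m • γ
    rw [hα, one_smul]
  ext u
  rw [LinearMap.mem_ker, Submodule.mem_span_singleton, LinearMap.add_apply, LinearMap.id_apply]
  constructor
  · intro h
    refine ⟨u (Fin.last m), ((EbMap_eq_self_iff α u).1 ?_).symm⟩
    exact funext fun i => (CharTwo.add_eq_zero.1 (congrFun h i)).symm
  · rintro ⟨c, rfl⟩
    rw [map_smul, hfix]
    exact funext fun i => CharTwo.add_eq_zero.2 rfl

end Companion

lemma partialSum_coeff_X_add_one_pow (k : Type) [Ring k] [CharP k 2] (m : ℕ) :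
    partialSum (fun j => ((X + 1 : k[X]) ^ (m + 1)).coeff j) m = 1 := by
  have h : partialSum (fun j => ((X + 1 : k[X]) ^ (m + 1)).coeff j) m + 1 = 0 := by
    have := congrArg (Nat.cast : ℕ → k) (Nat.sum_range_choose (m + 1))
    rw [Finset.sum_range_succ, Nat.choose_self] at this
    push_cast at this
    simpa [partialSum, coeff_X_add_one_pow, CharTwo.two_eq_zero] using this
  rwa [CharTwo.add_eq_zero] at h

theorem stmt18 (k : Type) [Field k] [CharP k 2] (n : ℕ) (hn : 1 ≤ n) :
    (LinearMap.ker ((ERep k n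
        (fun i => ((Polynomial.X + 1 : Polynomial k) ^ n).coeff i)).asAlgebraHom (aElt k))
      = Submodule.span k (Set.range (vVec k (I := Fin n) (J := Fin n)))) ∧
    (LinearMap.ker ((ERep k n
        (fun i => ((Polynomial.X + 1 : Polynomial k) ^ n).coeff i)).asAlgebraHom (bElt k))
      = Submodule.span k (Set.range (vVec k (I := Fin n) (J := Fin n)))) ∧
    (LinearMap.ker ((ERep k n
        (fun i => ((Polynomial.X + 1 : Polynomial k) ^ n).coeff i)).asAlgebraHom
          (aElt k + bElt k))
      = Submodule.span k
          (Set.range (vVec k (I := Fin n) (J := Fin n)) ∪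
            {∑ i : Fin n,
              (∑ j ∈ Finset.range ((i : ℕ) + 1),
                ((Polynomial.X + 1 : Polynomial k) ^ n).coeff j) • uVec k (J := Fin n) i})) ∧
    (LinearMap.ker ((ERep k n
        (fun i => ((Polynomial.X + 1 : Polynomial k) ^ n).coeff i)).asAlgebraHom (aElt k)) ⊔
     LinearMap.ker ((ERep k n
        (fun i => ((Polynomial.X + 1 : Polynomial k) ^ n).coeff i)).asAlgebraHom
          (aElt k + bElt k)) ⊔
     LinearMap.ker ((ERep k n
        (fun i => ((Polynomial.X + 1 : Polynomial k) ^ n).coeff i)).asAlgebraHom (bElt k))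
      = Submodule.span k
          (Set.range (vVec k (I := Fin n) (J := Fin n)) ∪
            {∑ i : Fin n,
              (∑ j ∈ Finset.range ((i : ℕ) + 1),
                ((Polynomial.X + 1 : Polynomial k) ^ n).coeff j) • uVec k (J := Fin n) i})) := by
  obtain ⟨m, rfl⟩ := Nat.exists_eq_add_of_le' hn
  set α : ℕ → k := fun j => ((X + 1 : k[X]) ^ (m + 1)).coeff j
  have hα₀ : α 0 = 1 := by simp [α, coeff_X_add_one_pow]
  have hker_a : LinearMap.ker ((ERep k (m + 1) fun i => α i).asAlgebraHom (aElt k)) =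
      Submodule.span k (Set.range (vVec k (I := Fin (m + 1)) (J := Fin (m + 1)))) := by
    rw [ERep_asAlgebraHom_aElt, ker_auxEnd, LinearMap.ker_id, span_range_vVec]
  have hker_b : LinearMap.ker ((ERep k (m + 1) fun i => α i).asAlgebraHom (bElt k)) =
      Submodule.span k (Set.range (vVec k (I := Fin (m + 1)) (J := Fin (m + 1)))) := by
    rw [ERep_asAlgebraHom_bElt, ker_auxEnd, ker_EbMap (by simp [hα₀]), span_range_vVec]
  have hker_ab : LinearMap.ker ((ERep k (m + 1) fun i => α i).asAlgebraHom (aElt k + bElt k)) =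
      Submodule.span k (Set.range (vVec k (I := Fin (m + 1)) (J := Fin (m + 1))) ∪
        {∑ i : Fin (m + 1), partialSum α i • uVec k (J := Fin (m + 1)) i}) := by
    rw [map_add, ERep_asAlgebraHom_aElt, ERep_asAlgebraHom_bElt, ← auxEnd_add, ker_auxEnd,
      ker_id_add_EbMap (partialSum_coeff_X_add_one_pow k m), sum_smul_uVec,
      span_range_vVec_union_singleton]
  refine ⟨hker_a, hker_b, hker_ab, ?_⟩
  rw [hker_a, hker_b, hker_ab, sup_right_comm, sup_idem,
    sup_eq_right.2 (Submodule.span_mono Set.subset_union_left)]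
  rfl
end
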